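/- (Lemma 4 on the Toda lattice.) Let a > 0, let u(n,r,θ) be smooth in (r,θ) for each n ∈ ℤ, let g : ℝ → ℂ be continuous and G : ℝ → ℂ an antiderivative of g (G′ = g), and assume the boundary condition u_r(n,a,θ) = −(i/a)u_θ(n,a,θ) + g(θ) for all n ∈ ℤ and θ ∈ ℝ. If φ₂ : ℤ × ℝ → ℂ (differentiable in θ) satisfies equation (V2), then the function φ₃(n,θ) = e^{−2inθ + iaG(θ)}·φ₂(n,θ) satisfies equation (V3). -/

import Mathlib

/-- The radial partial derivative `u_r(n, a, θ)`. -/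
noncomputable def uR (u : ℤ → ℝ → ℝ → ℂ) (a : ℝ) (n : ℤ) (θ : ℝ) : ℂ :=
  deriv (fun r : ℝ => u n r θ) a

/-- The angular partial derivative `u_θ(n, a, θ)`. -/
noncomputable def uT (u : ℤ → ℝ → ℝ → ℂ) (a : ℝ) (n : ℤ) (θ : ℝ) : ℂ :=
  deriv (fun t : ℝ => u n a t) θ

/-- `ω(n, a, θ) = exp(u(n,a,θ) − u(n+1,a,θ))`. -/
noncomputable def om (u : ℤ → ℝ → ℝ → ℂ) (a : ℝ) (n : ℤ) (θ : ℝ) : ℂ :=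
  Complex.exp (u n a θ - u (n + 1) a θ)

/-- `u(n,·,·)` is smooth in `(r,θ)` on `{r > 0}` for every `n`. -/
def SmoothOnHalf (u : ℤ → ℝ → ℝ → ℂ) : Prop :=
  ∀ n : ℤ, ContDiffOn ℝ (⊤ : ℕ∞) (fun p : ℝ × ℝ => u n p.1 p.2) {p : ℝ × ℝ | 0 < p.1}

/-- Equation (V1): the θ-part, restricted to `r = a`, of the original Lax pair of the
polar two-dimensional Toda lattice. -/
def V1 (a : ℝ) (u : ℤ → ℝ → ℝ → ℂ) (φ : ℤ → ℝ → ℂ) : Prop :=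
  ∀ (n : ℤ) (θ : ℝ), HasDerivAt (φ n)
    (Complex.I * a * Complex.exp (Complex.I * θ) / 2 * φ (n + 1) θ
      - Complex.I * a / 2 * (uR u a n θ - Complex.I / a * uT u a n θ) * φ n θ
      + Complex.I * a * Complex.exp (-(Complex.I * θ)) / 2 * om u a (n - 1) θ * φ (n - 1) θ) θ

/-- Equation (V2): the θ-part, restricted to `r = a`, of the Lax pair obtained from the
reflection `θ → −θ`. -/
def V2 (a : ℝ) (u : ℤ → ℝ → ℝ → ℂ) (φ : ℤ → ℝ → ℂ) : Prop :=
  ∀ (n : ℤ) (θ : ℝ), HasDerivAt (φ n)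
    (Complex.I * a * Complex.exp (-(Complex.I * θ)) / 2 * φ (n + 1) θ
      - Complex.I * a / 2 * (uR u a n θ + Complex.I / a * uT u a n θ) * φ n θ
      + Complex.I * a * Complex.exp (Complex.I * θ) / 2 * om u a (n - 1) θ * φ (n - 1) θ) θ

/-- Equation (V3): the θ-part, restricted to `r = a`, of the Lax pair obtained from the
Kelvin transformation. -/
def V3 (a : ℝ) (u : ℤ → ℝ → ℝ → ℂ) (φ : ℤ → ℝ → ℂ) : Prop :=
  ∀ (n : ℤ) (θ : ℝ), HasDerivAt (φ n)
    (Complex.I * a * Complex.exp (Complex.I * θ) / 2 * φ (n + 1) θ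
      - Complex.I * a / 2 * (-uR u a n θ + 4 * n / a - Complex.I / a * uT u a n θ) * φ n θ
      + Complex.I * a * Complex.exp (-(Complex.I * θ)) / 2 * om u a (n - 1) θ * φ (n - 1) θ) θ

/-- Equation (V4): the θ-part, restricted to `r = a`, of the Lax pair obtained from the
reflection `ũ(n) = −u(−n)`. -/
def V4 (a : ℝ) (u : ℤ → ℝ → ℝ → ℂ) (φ : ℤ → ℝ → ℂ) : Prop :=
  ∀ (n : ℤ) (θ : ℝ), HasDerivAt (φ n)
    (Complex.I * a * Complex.exp (Complex.I * θ) / 2 * φ (n - 1) θ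
      - Complex.I * a / 2 * (-uR u a n θ + Complex.I / a * uT u a n θ) * φ n θ
      + Complex.I * a * Complex.exp (-(Complex.I * θ)) / 2 * om u a n θ * φ (n + 1) θ) θ

/-! Multiplying by `e^{−2inθ}` turns the off-diagonal factors `e^{∓iθ}` of (V2) into the `e^{±iθ}`
of (V3) and adds `−2in` to the diagonal, which is the `4n/a` term of (V3). By the boundary
condition the remaining diagonal coefficients of (V2) and (V3) are `−(ia/2)g` and `+(ia/2)g`; the
factor `e^{iaG}` contributes exactly their difference `iag`. -/

open Complex

noncomputable def todaGauge (a : ℝ) (G : ℝ → ℂ) (n : ℤ) (θ : ℝ) : ℂ :=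
  exp (-(2 * I * n * θ) + I * a * G θ)

section TodaGauge

variable {a : ℝ} {G : ℝ → ℂ} {n : ℤ} {θ : ℝ}

theorem hasDerivAt_todaGauge {g : ℂ} (hG : HasDerivAt G g θ) :
    HasDerivAt (todaGauge a G n) (todaGauge a G n θ * (-(2 * I * n) + I * a * g)) θ := by
  have hphase : HasDerivAt (fun t : ℝ => -(2 * I * n * t) + I * a * G t)
      (-(2 * I * n) + I * a * g) θ := by
    have hid : HasDerivAt (fun t : ℝ => (t : ℂ)) 1 θ := ofRealCLM.hasDerivAt
    simpa using ((hid.const_mul (2 * I * n)).fun_neg).fun_add (hG.const_mul (I * a))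
  exact hphase.cexp

theorem todaGauge_add_one :
    todaGauge a G (n + 1) θ = todaGauge a G n θ * exp (-(I * θ)) ^ 2 := by
  rw [todaGauge, todaGauge, ← exp_nat_mul, ← exp_add]
  push_cast
  ring_nf

theorem todaGauge_sub_one :
    todaGauge a G (n - 1) θ = todaGauge a G n θ * exp (I * θ) ^ 2 := by
  rw [todaGauge, todaGauge, ← exp_nat_mul, ← exp_add]
  push_cast
  ring_nf

end TodaGauge

theorem toda_lemma4_general (a : ℝ) (ha : 0 < a) (u : ℤ → ℝ → ℝ → ℂ)
    (g G : ℝ → ℂ) (hG : ∀ θ : ℝ, HasDerivAt G (g θ) θ)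
    (hbc : ∀ (n : ℤ) (θ : ℝ), uR u a n θ = -(Complex.I / a) * uT u a n θ + g θ)
    (φ₂ : ℤ → ℝ → ℂ) (hφ₂ : V2 a u φ₂) :
    V3 a u (fun n θ =>
      Complex.exp (-(2 * Complex.I * n * θ) + Complex.I * a * G θ) * φ₂ n θ) := by
  show V3 a u (fun n θ => todaGauge a G n θ * φ₂ n θ)
  intro n θ
  have ha' : (a : ℂ) ≠ 0 := by exact_mod_cast ha.ne'
  have hexp_mul_inv : exp (I * θ) * exp (-(I * θ)) = 1 := by
    rw [← exp_add, add_neg_cancel, exp_zero]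
  have hV2diag : uR u a n θ + I / a * uT u a n θ = g θ := by rw [hbc]; ring
  have hV3diag : -uR u a n θ + 4 * n / a - I / a * uT u a n θ = -g θ + 4 * n / a := by
    rw [hbc]; ring
  refine ((hasDerivAt_todaGauge (n := n) (hG θ)).mul (hφ₂ n θ)).congr_deriv ?_
  beta_reduce
  rw [hV2diag, hV3diag, todaGauge_add_one, todaGauge_sub_one]
  linear_combination -(I * a / 2 * todaGauge a G n θ * (φ₂ (n + 1) θ * exp (-(I * θ))
      + om u a (n - 1) θ * φ₂ (n - 1) θ * exp (I * θ))) * hexp_mul_inv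
    + 2 * I * todaGauge a G n θ * n * φ₂ n θ * mul_inv_cancel₀ ha'

/-- Lemma 4 on the Toda lattice: under the boundary condition
`u_r(n,a,θ) = −(i/a) u_θ(n,a,θ) + g(θ)`, if `φ₂` solves (V2) then
`φ₃(n,θ) = e^{−2inθ + iaG(θ)} φ₂(n,θ)` solves (V3), where `G′ = g`. -/
theorem toda_lemma4 (a : ℝ) (ha : 0 < a) (u : ℤ → ℝ → ℝ → ℂ) (hu : SmoothOnHalf u)
    (g G : ℝ → ℂ) (hg : Continuous g) (hG : ∀ θ : ℝ, HasDerivAt G (g θ) θ)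
    (hbc : ∀ (n : ℤ) (θ : ℝ), uR u a n θ = -(Complex.I / a) * uT u a n θ + g θ)
    (φ₂ : ℤ → ℝ → ℂ) (hφ₂ : V2 a u φ₂) :
    V3 a u (fun n θ =>
      Complex.exp (-(2 * Complex.I * n * θ) + Complex.I * a * G θ) * φ₂ n θ) :=
  toda_lemma4_general a ha u g G hG hbc φ₂ hφ₂
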